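/- arXiv:1706.00331 — 2 statements merged into one kernel-verified Lean document; each statement's English description precedes it below -/
import Mathlib

section
/- Let φ : closure(B_R) → ℝ be a C² function on the closed disk of radius R in ℝ² with Δφ ≥ −C for some constant C > 0. Then φ(0) ≤ (1/8)·C·R² + (1/(πR²))·∫_{B_R} φ. -/
/-!
For `0 < r < R` let `M(r) = ∫_{-π}^{π} φ(r e^{iθ}) dθ`. In polar coordinates the Laplacian reads
`r ∂ᵣ(r ∂ᵣφ) + ∂²_θ φ = r² Δφ`; integrating in `θ` kills the angular term, so
`∂ᵣ ∫ r ∂ᵣφ dθ = r ∫ Δφ dθ ≥ -2πCr`, whence `∫ ∂ᵣφ dθ ≥ -πCr` and `M(r) ≥ 2πφ(0) - πCr²/2`.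
Integrating `r M(r)` over `[0, R]` gives `∫_{B_R} φ ≥ πR²φ(0) - πCR⁴/8`.
The `r`-derivatives are moved inside the `θ`-integrals by Fubini and the fundamental theorem of
calculus on rectangles `[0, r] × [-π, π]`, where everything is continuous.
-/

open Real MeasureTheory Set Metric Function Complex ContinuousLinearMap

/-- The Laplacian `Δφ = ∂²φ/∂s² + ∂²φ/∂t²` of a function `φ : ℂ ≅ ℝ² → ℝ`. -/
noncomputable def lap (φ : ℂ → ℝ) (z : ℂ) : ℝ :=
  fderiv ℝ (fun w => fderiv ℝ φ w 1) z 1 +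
  fderiv ℝ (fun w => fderiv ℝ φ w Complex.I) z Complex.I

theorem lap_eq_fderiv_fderiv {φ : ℂ → ℝ} {z : ℂ} (h : DifferentiableAt ℝ (fderiv ℝ φ) z) :
    lap φ z = fderiv ℝ (fderiv ℝ φ) z 1 1 + fderiv ℝ (fderiv ℝ φ) z I I := by
  simp [lap, fderiv_clm_apply h (differentiableAt_const _)]

section Rectangle

variable {E : Type*} [NormedAddCommGroup E] {u : ℝ → ℝ → E} {a b c d : ℝ}

theorem ContinuousOn.integrable_prod_restrict_Icc
    (hu : ContinuousOn (uncurry u) (Icc a b ×ˢ Icc c d)) :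
    Integrable (uncurry u) ((volume.restrict (Icc a b)).prod (volume.restrict (Icc c d))) := by
  rw [Measure.prod_restrict, ← Measure.volume_eq_prod]
  exact hu.integrableOn_compact (isCompact_Icc.prod isCompact_Icc)

variable [NormedSpace ℝ E]

theorem intervalIntegral_eq_setIntegral_Icc {f : ℝ → E} (hab : a ≤ b) :
    ∫ s in a..b, f s = ∫ s in Icc a b, f s := by
  rw [intervalIntegral.integral_of_le hab, integral_Icc_eq_integral_Ioc]

theorem ContinuousOn.intervalIntegrable_intervalIntegral (hab : a ≤ b) (hcd : c ≤ d)
    (hu : ContinuousOn (uncurry u) (Icc a b ×ˢ Icc c d)) :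
    IntervalIntegrable (fun s => ∫ θ in c..d, u s θ) volume a b := by
  rw [intervalIntegrable_iff_integrableOn_Icc_of_le hab]
  simp_rw [intervalIntegral_eq_setIntegral_Icc hcd]
  exact hu.integrable_prod_restrict_Icc.integral_prod_left

theorem ContinuousOn.intervalIntegral_comm (hab : a ≤ b) (hcd : c ≤ d)
    (hu : ContinuousOn (uncurry u) (Icc a b ×ˢ Icc c d)) :
    ∫ s in a..b, ∫ θ in c..d, u s θ = ∫ θ in c..d, ∫ s in a..b, u s θ := by
  simp_rw [intervalIntegral_eq_setIntegral_Icc hab, intervalIntegral_eq_setIntegral_Icc hcd]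
  exact integral_integral_swap hu.integrable_prod_restrict_Icc

theorem integral_sub_eq_integral_integral_of_hasDerivAt [CompleteSpace E] {U : ℝ → ℝ → E}
    (hab : a ≤ b) (hcd : c ≤ d) (hu : ContinuousOn (uncurry u) (Icc a b ×ˢ Icc c d))
    (hU : ∀ s ∈ Icc a b, ∀ θ ∈ Icc c d, HasDerivAt (U · θ) (u s θ) s) :
    ∫ θ in c..d, (U b θ - U a θ) = ∫ s in a..b, ∫ θ in c..d, u s θ := by
  rw [hu.intervalIntegral_comm hab hcd]
  refine intervalIntegral.integral_congr fun θ hθ => ?_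
  rw [uIcc_of_le hcd] at hθ
  have hslice : ContinuousOn (u · θ) (Icc a b) :=
    hu.comp (continuous_id.prodMk continuous_const).continuousOn fun s hs => ⟨hs, hθ⟩
  refine (intervalIntegral.integral_eq_sub_of_hasDerivAt (f := (U · θ)) (fun s hs => ?_)
    (hslice.intervalIntegrable_of_Icc hab)).symm
  rw [uIcc_of_le hab] at hs
  exact hU s hs θ hθ

theorem neg_mul_sq_div_two_le_integral_sub {u U : ℝ → ℝ → ℝ} {k : ℝ} (hb : 0 ≤ b) (hcd : c ≤ d)
    (hu : ContinuousOn (uncurry u) (Icc 0 b ×ˢ Icc c d))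
    (hU : ∀ s ∈ Icc 0 b, ∀ θ ∈ Icc c d, HasDerivAt (U · θ) (u s θ) s)
    (hk : ∀ s ∈ Ioo 0 b, -(k * s) ≤ ∫ θ in c..d, u s θ) :
    -(k * b ^ 2 / 2) ≤ ∫ θ in c..d, (U b θ - U 0 θ) := by
  rw [integral_sub_eq_integral_integral_of_hasDerivAt hb hcd hu hU]
  calc -(k * b ^ 2 / 2) = ∫ s in (0:ℝ)..b, -(k * s) := by
        rw [intervalIntegral.integral_neg, intervalIntegral.integral_const_mul, integral_id]; ring
    _ ≤ _ := intervalIntegral.integral_mono_on_of_le_Ioo hb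
        ((by fun_prop : Continuous fun s : ℝ => -(k * s)).intervalIntegrable _ _)
        (hu.intervalIntegrable_intervalIntegral hb hcd) hk

end Rectangle

section Polar

variable {E F : Type*} [NormedAddCommGroup E] [NormedSpace ℝ E]
  [NormedAddCommGroup F] [NormedSpace ℝ F]

theorem ContinuousLinearMap.apply_add_apply_mul_I (H : ℂ →L[ℝ] ℂ →L[ℝ] F) (u : ℂ) :
    H u u + H (u * I) (u * I) = ‖u‖ ^ 2 • (H 1 1 + H I I) := by
  have hu : u.re ^ 2 + u.im ^ 2 = ‖u‖ ^ 2 := by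
    rw [Complex.sq_norm, Complex.normSq_apply, sq, sq]
  have hdecomp : u = u.re • (1 : ℂ) + u.im • I := by simp [Complex.real_smul, Complex.re_add_im]
  have hrot : u * I = (-u.im) • (1 : ℂ) + u.re • I := by
    apply Complex.ext <;> simp
  generalize u.re = x, u.im = y, ‖u‖ = r at hu hdecomp hrot ⊢
  rw [hrot, hdecomp]
  simp only [map_add, map_smul, add_apply, smul_apply]
  linear_combination (norm := module) hu • (H 1 1 + H I I)

theorem ContDiffOn.differentiableAt_fderiv {f : E → F} {s : Set E} (hf : ContDiffOn ℝ 2 f s)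
    (hs : IsOpen s) {x : E} (hx : x ∈ s) : DifferentiableAt ℝ (fderiv ℝ f) x :=
  ((hf.contDiffAt (hs.mem_nhds hx)).fderiv_right (m := 1) le_rfl).differentiableAt one_ne_zero

theorem ContDiffOn.continuousOn_fderiv_fderiv {f : E → F} {s : Set E} (hf : ContDiffOn ℝ 2 f s)
    (hs : IsOpen s) : ContinuousOn (fderiv ℝ (fderiv ℝ f)) s :=
  (hf.fderiv_of_isOpen hs (m := 1) le_rfl).continuousOn_fderiv_of_isOpen hs le_rfl

theorem circleMap_mem_ball {t R : ℝ} (ht : |t| < R) (θ : ℝ) :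
    circleMap 0 t θ ∈ ball (0 : ℂ) R := by
  rwa [mem_ball_zero_iff, norm_circleMap_zero]

theorem circleMap_zero_eq_smul (t θ : ℝ) : circleMap 0 t θ = t • circleMap 0 1 θ := by
  simp [circleMap_zero, Complex.real_smul]

theorem hasDerivAt_circleMap_radius (c : ℂ) (t θ : ℝ) :
    HasDerivAt (circleMap c · θ) (circleMap 0 1 θ) t := by
  simpa [circleMap] using ((ofRealCLM.hasDerivAt (x := t)).mul_const (exp (θ * I))).const_add c

theorem DifferentiableAt.hasDerivAt_comp_circleMap_radius {f : ℂ → F} {t θ : ℝ}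
    (hf : DifferentiableAt ℝ f (circleMap 0 t θ)) :
    HasDerivAt (fun s => f (circleMap 0 s θ))
      (fderiv ℝ f (circleMap 0 t θ) (circleMap 0 1 θ)) t :=
  hf.hasFDerivAt.comp_hasDerivAt t (hasDerivAt_circleMap_radius 0 t θ)

theorem DifferentiableAt.hasDerivAt_comp_circleMap {f : ℂ → F} {t θ : ℝ}
    (hf : DifferentiableAt ℝ f (circleMap 0 t θ)) :
    HasDerivAt (fun ψ => f (circleMap 0 t ψ))
      (fderiv ℝ f (circleMap 0 t θ) (circleMap 0 t θ * I)) θ :=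
  hf.hasFDerivAt.comp_hasDerivAt θ (hasDerivAt_circleMap 0 t θ)

theorem hasDerivAt_fderiv_apply_circleMap_radius {f : ℂ → F} {t θ : ℝ}
    (h : DifferentiableAt ℝ (fderiv ℝ f) (circleMap 0 t θ)) :
    HasDerivAt (fun s => fderiv ℝ f (circleMap 0 s θ) (circleMap 0 s θ))
      (fderiv ℝ (fderiv ℝ f) (circleMap 0 t θ) (circleMap 0 1 θ) (circleMap 0 t θ)
        + fderiv ℝ f (circleMap 0 t θ) (circleMap 0 1 θ)) t :=
  h.hasDerivAt_comp_circleMap_radius.clm_apply (hasDerivAt_circleMap_radius 0 t θ)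

theorem hasDerivAt_fderiv_apply_circleMap_mul_I {f : ℂ → F} {t θ : ℝ}
    (h : DifferentiableAt ℝ (fderiv ℝ f) (circleMap 0 t θ)) :
    HasDerivAt (fun ψ => fderiv ℝ f (circleMap 0 t ψ) (circleMap 0 t ψ * I))
      (fderiv ℝ (fderiv ℝ f) (circleMap 0 t θ) (circleMap 0 t θ * I) (circleMap 0 t θ * I)
        - fderiv ℝ f (circleMap 0 t θ) (circleMap 0 t θ)) θ := by
  have := h.hasDerivAt_comp_circleMap.clm_apply ((hasDerivAt_circleMap 0 t θ).mul_const I)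
  simpa [mul_assoc, sub_eq_add_neg] using this

theorem ContinuousOn.comp_circleMap_Icc_prod {X : Type*} [TopologicalSpace X] {G : ℂ → X}
    {b c d : ℝ} (hG : ContinuousOn G (closedBall 0 b)) :
    ContinuousOn (uncurry fun t θ => G (circleMap 0 t θ)) (Icc 0 b ×ˢ Icc c d) := by
  refine hG.comp (by fun_prop) fun p hp => ?_
  simpa [norm_circleMap_zero, abs_of_nonneg hp.1.1] using hp.1.2

theorem Complex.polarCoord_symm_eq_circleMap (p : ℝ × ℝ) :
    Complex.polarCoord.symm p = circleMap 0 p.1 p.2 := by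
  simp [circleMap_zero, exp_mul_I, ← ofReal_cos, ← ofReal_sin]

theorem integral_ball_eq_intervalIntegral_polar {f : ℂ → E} {R : ℝ} (hR : 0 ≤ R)
    (hf : ContinuousOn f (closedBall 0 R)) :
    ∫ z in ball 0 R, f z = ∫ s in 0..R, ∫ θ in -π..π, s • f (circleMap 0 s θ) := by
  have hint : IntegrableOn (fun p : ℝ × ℝ => p.1 • f (circleMap 0 p.1 p.2))
      (Ioo 0 R ×ˢ Ioo (-π) π) :=
    ((continuous_fst.continuousOn.smul (hf.comp_circleMap_Icc_prod (c := -π) (d := π))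
      ).integrableOn_compact (isCompact_Icc.prod isCompact_Icc)).mono_set
      (prod_mono Ioo_subset_Icc_self Ioo_subset_Icc_self)
  have hpolar : ∀ p ∈ polarCoord.target,
      p.1 • (ball 0 R).indicator f (Complex.polarCoord.symm p)
        = (Ioo 0 R ×ˢ univ).indicator (fun p : ℝ × ℝ => p.1 • f (circleMap 0 p.1 p.2)) p := by
    rintro ⟨t, θ⟩ ⟨ht, -⟩
    replace ht : 0 < t := ht
    rw [Complex.polarCoord_symm_eq_circleMap]
    by_cases htR : t < R
    · rw [indicator_of_mem, indicator_of_mem] <;>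
        simp_all [norm_circleMap_zero, abs_of_pos ht]
    · rw [indicator_of_notMem, indicator_of_notMem, smul_zero] <;>
        simp_all [norm_circleMap_zero, abs_of_pos ht]
  have htarget : polarCoord.target ∩ Ioo 0 R ×ˢ univ = Ioo 0 R ×ˢ Ioo (-π) π := by
    ext ⟨t, θ⟩
    simp only [polarCoord_target, mem_inter_iff, mem_prod, mem_Ioi, mem_Ioo, mem_univ]
    tauto
  rw [← integral_indicator measurableSet_ball, ← Complex.integral_comp_polarCoord_symm,
    setIntegral_congr_fun polarCoord.open_target.measurableSet hpolar,
    setIntegral_indicator (measurableSet_Ioo.prod MeasurableSet.univ), htarget,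
    Measure.volume_eq_prod, setIntegral_prod _ hint, intervalIntegral.integral_of_le hR,
    integral_Ioc_eq_integral_Ioo]
  simp only [intervalIntegral.integral_of_le (neg_le_self pi_pos.le),
    integral_Ioc_eq_integral_Ioo]

end Polar

section Disk

variable {φ : ℂ → ℝ} {R C : ℝ}

theorem continuous_lap_comp_circleMap (hφ : ContDiffOn ℝ 2 φ (ball 0 R)) {t : ℝ}
    (ht : |t| < R) : Continuous fun θ => lap φ (circleMap 0 t θ) := by
  have hH : Continuous fun θ => fderiv ℝ (fderiv ℝ φ) (circleMap 0 t θ) :=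
    (hφ.continuousOn_fderiv_fderiv isOpen_ball).comp_continuous (continuous_circleMap 0 t)
      (circleMap_mem_ball ht)
  refine Continuous.congr (by fun_prop : Continuous fun θ =>
    fderiv ℝ (fderiv ℝ φ) (circleMap 0 t θ) 1 1 + fderiv ℝ (fderiv ℝ φ) (circleMap 0 t θ) I I)
    fun θ => ?_
  exact (lap_eq_fderiv_fderiv
    (hφ.differentiableAt_fderiv isOpen_ball (circleMap_mem_ball ht θ))).symm

theorem integral_fderiv_apply_add_fderiv_fderiv_apply_circleMap
    (hφ : ContDiffOn ℝ 2 φ (ball 0 R)) {t : ℝ} (ht : |t| < R) :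
    ∫ θ in -π..π, (fderiv ℝ φ (circleMap 0 t θ) (circleMap 0 t θ)
        + fderiv ℝ (fderiv ℝ φ) (circleMap 0 t θ) (circleMap 0 t θ) (circleMap 0 t θ))
      = t ^ 2 * ∫ θ in -π..π, lap φ (circleMap 0 t θ) := by
  have hd θ := hφ.differentiableAt_fderiv isOpen_ball (circleMap_mem_ball ht θ)
  have hD : Continuous fun θ => fderiv ℝ φ (circleMap 0 t θ) :=
    (hφ.continuousOn_fderiv_of_isOpen isOpen_ball one_le_two).comp_continuous
      (continuous_circleMap 0 t) (circleMap_mem_ball ht)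
  have hH : Continuous fun θ => fderiv ℝ (fderiv ℝ φ) (circleMap 0 t θ) :=
    (hφ.continuousOn_fderiv_fderiv isOpen_ball).comp_continuous (continuous_circleMap 0 t)
      (circleMap_mem_ball ht)
  have hz : Continuous (circleMap 0 t) := continuous_circleMap 0 t
  have hk : Continuous fun θ => fderiv ℝ (fderiv ℝ φ) (circleMap 0 t θ) (circleMap 0 t θ * I)
      (circleMap 0 t θ * I) - fderiv ℝ φ (circleMap 0 t θ) (circleMap 0 t θ) := by
    fun_prop
  -- `hk` is `∂²_θ φ`, which integrates to zero over a period
  have hangular : ∫ θ in -π..π, (fderiv ℝ (fderiv ℝ φ) (circleMap 0 t θ) (circleMap 0 t θ * I)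
      (circleMap 0 t θ * I) - fderiv ℝ φ (circleMap 0 t θ) (circleMap 0 t θ)) = 0 := by
    rw [intervalIntegral.integral_eq_sub_of_hasDerivAt
      (fun θ _ => hasDerivAt_fderiv_apply_circleMap_mul_I (hd θ)) (hk.intervalIntegrable _ _),
      sub_eq_zero]
    have hperiod := periodic_circleMap 0 t (-π)
    rw [show -π + 2 * π = π by ring] at hperiod
    rw [hperiod]
  -- the Laplacian in polar coordinates: `r ∂ᵣ(r ∂ᵣφ) + ∂²_θ φ = r² Δφ`
  have hpolar θ : fderiv ℝ φ (circleMap 0 t θ) (circleMap 0 t θ)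
        + fderiv ℝ (fderiv ℝ φ) (circleMap 0 t θ) (circleMap 0 t θ) (circleMap 0 t θ)
      = t ^ 2 * lap φ (circleMap 0 t θ)
        - (fderiv ℝ (fderiv ℝ φ) (circleMap 0 t θ) (circleMap 0 t θ * I) (circleMap 0 t θ * I)
          - fderiv ℝ φ (circleMap 0 t θ) (circleMap 0 t θ)) := by
    have hrot := (fderiv ℝ (fderiv ℝ φ) (circleMap 0 t θ)).apply_add_apply_mul_I (circleMap 0 t θ)
    rw [norm_circleMap_zero, sq_abs, smul_eq_mul] at hrot
    rw [lap_eq_fderiv_fderiv (hd θ)]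
    linarith
  simp_rw [hpolar]
  rw [intervalIntegral.integral_sub
    (((continuous_lap_comp_circleMap hφ ht).const_mul _).intervalIntegrable _ _)
    (hk.intervalIntegrable _ _), hangular, sub_zero, intervalIntegral.integral_const_mul]

theorem neg_two_pi_mul_le_integral_deriv_fderiv_apply_self (hφ : ContDiffOn ℝ 2 φ (ball 0 R))
    (hlap : ∀ z ∈ ball 0 R, -C ≤ lap φ z) {t : ℝ} (ht : t ∈ Ioo 0 R) :
    -(2 * π * C * t) ≤ ∫ θ in -π..π,
      (fderiv ℝ (fderiv ℝ φ) (circleMap 0 t θ) (circleMap 0 1 θ) (circleMap 0 t θ)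
        + fderiv ℝ φ (circleMap 0 t θ) (circleMap 0 1 θ)) := by
  have ht' : |t| < R := by rw [abs_of_pos ht.1]; exact ht.2
  have hscale : t * ∫ θ in -π..π,
      (fderiv ℝ (fderiv ℝ φ) (circleMap 0 t θ) (circleMap 0 1 θ) (circleMap 0 t θ)
        + fderiv ℝ φ (circleMap 0 t θ) (circleMap 0 1 θ))
      = t ^ 2 * ∫ θ in -π..π, lap φ (circleMap 0 t θ) := by
    rw [← integral_fderiv_apply_add_fderiv_fderiv_apply_circleMap hφ ht',
      ← intervalIntegral.integral_const_mul]
    congr 1 with θ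
    rw [circleMap_zero_eq_smul t θ]
    simp only [map_smul, smul_apply, smul_eq_mul]
    ring
  have hlap_int : -(2 * π * C) ≤ ∫ θ in -π..π, lap φ (circleMap 0 t θ) := by
    calc -(2 * π * C) = ∫ _ in -π..π, -C := by
          rw [intervalIntegral.integral_const, smul_eq_mul]; ring
      _ ≤ _ := intervalIntegral.integral_mono_on (by linarith [pi_pos]) intervalIntegrable_const
          ((continuous_lap_comp_circleMap hφ ht').intervalIntegrable _ _)
          fun θ _ => hlap _ (circleMap_mem_ball ht' θ)
  nlinarith [ht.1]

theorem neg_pi_mul_le_integral_fderiv_apply_circleMap_one (hφ : ContDiffOn ℝ 2 φ (ball 0 R))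
    (hlap : ∀ z ∈ ball 0 R, -C ≤ lap φ z) {s : ℝ} (hs : s ∈ Ioo 0 R) :
    -(π * C * s) ≤ ∫ θ in -π..π, fderiv ℝ φ (circleMap 0 s θ) (circleMap 0 1 θ) := by
  have hsR : closedBall (0 : ℂ) s ⊆ ball 0 R := closedBall_subset_ball hs.2
  have hH := ((hφ.continuousOn_fderiv_fderiv isOpen_ball).mono hsR).comp_circleMap_Icc_prod
    (c := -π) (d := π)
  have hD := ((hφ.continuousOn_fderiv_of_isOpen isOpen_ball one_le_two).mono
    hsR).comp_circleMap_Icc_prod (c := -π) (d := π)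
  have he : ContinuousOn (uncurry fun (_ : ℝ) θ => circleMap 0 1 θ) (Icc 0 s ×ˢ Icc (-π) π) := by
    fun_prop
  have hz : ContinuousOn (uncurry fun t θ => circleMap 0 t θ) (Icc 0 s ×ˢ Icc (-π) π) := by
    fun_prop
  have key := neg_mul_sq_div_two_le_integral_sub (k := 2 * π * C)
    (U := fun t θ => fderiv ℝ φ (circleMap 0 t θ) (circleMap 0 t θ))
    (u := fun t θ => fderiv ℝ (fderiv ℝ φ) (circleMap 0 t θ) (circleMap 0 1 θ) (circleMap 0 t θ)
      + fderiv ℝ φ (circleMap 0 t θ) (circleMap 0 1 θ)) hs.1.le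
    (neg_le_self pi_pos.le) (((hH.clm_apply he).clm_apply hz).add (hD.clm_apply he))
    (fun t ht θ _ => hasDerivAt_fderiv_apply_circleMap_radius (hφ.differentiableAt_fderiv
      isOpen_ball (hsR (closedBall_subset_closedBall ht.2 (circleMap_mem_closedBall 0 ht.1 θ)))))
    (fun t ht => neg_two_pi_mul_le_integral_deriv_fderiv_apply_self hφ hlap
      ⟨ht.1, ht.2.trans hs.2⟩)
  simp only [circleMap_zero_radius, Function.const_apply, map_zero, sub_zero] at key
  have heuler θ : fderiv ℝ φ (circleMap 0 s θ) (circleMap 0 s θ)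
      = s * fderiv ℝ φ (circleMap 0 s θ) (circleMap 0 1 θ) := by
    rw [← smul_eq_mul, ← map_smul, ← circleMap_zero_eq_smul]
  simp only [heuler, intervalIntegral.integral_const_mul] at key
  nlinarith [hs.1]

theorem two_pi_mul_sub_le_integral_comp_circleMap (hφ : ContDiffOn ℝ 2 φ (ball 0 R))
    (hlap : ∀ z ∈ ball 0 R, -C ≤ lap φ z) {r : ℝ} (hr : r ∈ Ico 0 R) :
    2 * π * φ 0 - π * C * r ^ 2 / 2 ≤ ∫ θ in -π..π, φ (circleMap 0 r θ) := by
  have hrR : closedBall (0 : ℂ) r ⊆ ball 0 R := closedBall_subset_ball hr.2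
  have hD := ((hφ.continuousOn_fderiv_of_isOpen isOpen_ball one_le_two).mono
    hrR).comp_circleMap_Icc_prod (c := -π) (d := π)
  have he : ContinuousOn (uncurry fun (_ : ℝ) θ => circleMap 0 1 θ) (Icc 0 r ×ˢ Icc (-π) π) := by
    fun_prop
  have key := neg_mul_sq_div_two_le_integral_sub (k := π * C)
    (U := fun t θ => φ (circleMap 0 t θ))
    (u := fun t θ => fderiv ℝ φ (circleMap 0 t θ) (circleMap 0 1 θ)) hr.1
    (neg_le_self pi_pos.le) (hD.clm_apply he)
    (fun t ht θ _ => ((hφ.differentiableOn two_ne_zero).differentiableAt (isOpen_ball.mem_nhds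
      (hrR (closedBall_subset_closedBall ht.2 (circleMap_mem_closedBall 0 ht.1 θ)))))
        |>.hasDerivAt_comp_circleMap_radius)
    (fun t ht => neg_pi_mul_le_integral_fderiv_apply_circleMap_one hφ hlap
      ⟨ht.1, ht.2.trans hr.2⟩)
  have hcont : Continuous fun θ => φ (circleMap 0 r θ) :=
    (hφ.continuousOn.mono hrR).comp_continuous (continuous_circleMap 0 r)
      (circleMap_mem_closedBall 0 hr.1)
  simp only [circleMap_zero_radius, Function.const_apply] at key
  rw [intervalIntegral.integral_sub (hcont.intervalIntegrable _ _) intervalIntegrable_const,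
    intervalIntegral.integral_const, smul_eq_mul] at key
  linarith

theorem pi_mul_sq_mul_sub_le_integral_ball (hR : 0 ≤ R)
    (hφ : ContDiffOn ℝ 2 φ (closedBall 0 R)) (hlap : ∀ z ∈ ball 0 R, -C ≤ lap φ z) :
    π * R ^ 2 * φ 0 - π * C * R ^ 4 / 8 ≤ ∫ z in ball 0 R, φ z := by
  have hpolar : ContinuousOn (uncurry fun s θ => s • φ (circleMap 0 s θ))
      (Icc 0 R ×ˢ Icc (-π) π) :=
    continuous_fst.continuousOn.smul hφ.continuousOn.comp_circleMap_Icc_prod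
  have hpoly s : s * (2 * π * φ 0 - π * C * s ^ 2 / 2) = 2 * π * φ 0 * s - π * C / 2 * s ^ 3 := by
    ring
  rw [integral_ball_eq_intervalIntegral_polar hR hφ.continuousOn]
  calc π * R ^ 2 * φ 0 - π * C * R ^ 4 / 8
      = ∫ s in 0..R, s * (2 * π * φ 0 - π * C * s ^ 2 / 2) := by
        simp_rw [hpoly]
        rw [intervalIntegral.integral_sub (intervalIntegral.intervalIntegrable_id.const_mul _)
          ((intervalIntegral.intervalIntegrable_pow 3).const_mul _),
          intervalIntegral.integral_const_mul, intervalIntegral.integral_const_mul, integral_id,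
          integral_pow]
        ring
    _ ≤ _ := by
        refine intervalIntegral.integral_mono_on_of_le_Ioo hR
          ((by fun_prop : Continuous fun s : ℝ => s * (2 * π * φ 0 - π * C * s ^ 2 / 2)
            ).intervalIntegrable _ _)
          (hpolar.intervalIntegrable_intervalIntegral hR (neg_le_self pi_pos.le)) fun s hs => ?_
        simp only [smul_eq_mul, intervalIntegral.integral_const_mul]
        exact mul_le_mul_of_nonneg_left (two_pi_mul_sub_le_integral_comp_circleMap
          (hφ.mono ball_subset_closedBall) hlap ⟨hs.1.le, hs.2⟩) hs.1.le

end Disk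

theorem stmt2_general (R C : ℝ) (hR : 0 < R) (φ : ℂ → ℝ)
    (hφ : ContDiffOn ℝ 2 φ (Metric.closedBall 0 R))
    (hlap : ∀ z ∈ Metric.ball (0:ℂ) R, -C ≤ lap φ z) :
    φ 0 ≤ (1/8) * C * R ^ 2 + (1 / (π * R ^ 2)) * ∫ z in Metric.ball (0:ℂ) R, φ z := by
  have hmean := pi_mul_sq_mul_sub_le_integral_ball hR.le hφ hlap
  have hπR : 0 < π * R ^ 2 := by positivity
  have key : φ 0 - (1/8) * C * R ^ 2 ≤ (∫ z in ball 0 R, φ z) / (π * R ^ 2) := by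
    rw [le_div_iff₀ hπR]
    linarith
  linarith [one_div_mul_eq_div (π * R ^ 2) (∫ z in ball 0 R, φ z)]

/-- If `φ` is `C²` on the closed disk of radius `R` in `ℝ² ≅ ℂ` and `Δφ ≥ -C`
for some constant `C > 0`, then `φ(0) ≤ (1/8)·C·R² + (1/(πR²))·∫_{B_R} φ`. -/
theorem stmt2 (R C : ℝ) (hR : 0 < R) (hC : 0 < C) (φ : ℂ → ℝ)
    (hφ : ContDiffOn ℝ 2 φ (Metric.closedBall 0 R))
    (hlap : ∀ z ∈ Metric.ball (0:ℂ) R, -C ≤ lap φ z) :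
    φ 0 ≤ (1/8) * C * R ^ 2 + (1 / (π * R ^ 2)) * ∫ z in Metric.ball (0:ℂ) R, φ z :=
  stmt2_general R C hR φ hφ hlap
end

section
/- Let u : B_R \ {0} → ℂ be a holomorphic function on the punctured disk with finite energy E(u) = (1/2)∫_{B_R \ {0}} |du|² < ∞ (equivalently ∫ |u'(z)|² dA < ∞). Then u extends to a holomorphic function on B_R. -/
/-!
For holomorphic `f` the function `‖f‖²` is subharmonic, so `π (|z|/2)² ‖u' z‖²` is bounded by the
integral of `‖u'‖²` over the disc of radius `|z|/2` around `z`, which lies in the punctured disc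
of radius `2|z|`. Finite energy makes that integral tend to `0`, hence `u' z = o(1/z)` and `u'`
extends holomorphically across `0`. The extension has a primitive on `B_R`, and on the connected
punctured disc `u` differs from this primitive by a constant.
-/

open MeasureTheory
open Metric Set Filter Topology Real Asymptotics

theorem isPreconnected_ball_diff_singleton {E : Type*} [NormedAddCommGroup E] [NormedSpace ℝ E]
    (h : 1 < Module.rank ℝ E) (c : E) (r : ℝ) : IsPreconnected (ball c r \ {c}) := by
  rcases le_or_gt r 0 with hr | hr
  · simp [ball_eq_empty.2 hr, isPreconnected_empty]
  set e := OpenPartialHomeomorph.univBall c r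
  have himage : e '' {0}ᶜ = ball c r \ {c} := by
    have hsource : ({0}ᶜ : Set E) = e.source \ {0} := by simp [e, compl_eq_univ_sdiff]
    rw [hsource, e.injOn.image_sdiff_subset (by simp [e]), image_singleton,
      e.image_source_eq_target, OpenPartialHomeomorph.univBall_apply_zero,
      OpenPartialHomeomorph.univBall_target c hr]
  rw [← himage]
  exact (isConnected_compl_singleton_of_one_lt_rank h 0).isPreconnected.image _
    (OpenPartialHomeomorph.continuous_univBall c r).continuousOn

theorem closedBall_half_dist_subset_ball_diff_singleton {X : Type*} [MetricSpace X] {z c : X}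
    (hz : z ≠ c) : closedBall z (dist z c / 2) ⊆ ball c (2 * dist z c) \ {c} := by
  intro w hw
  have hd := dist_pos.2 hz
  have hwz : dist w z ≤ dist z c / 2 := hw
  refine ⟨mem_ball.2 (by linarith [dist_triangle w z c]), fun hwc ↦ ?_⟩
  rw [mem_singleton_iff.1 hwc, dist_comm] at hwz
  linarith

section Integrals

variable {E : Type*} [NormedAddCommGroup E] [NormedSpace ℝ E]

theorem tendsto_setIntegral_inter_ball_nhds_zero {g : ℂ → E} {s : Set ℂ} (hg : IntegrableOn g s)
    (c : ℂ) : Tendsto (fun t ↦ ∫ z in s ∩ ball c t, g z) (𝓝 0) (𝓝 0) := by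
  have hvol : Tendsto (fun t : ℝ ↦ volume (ball c t)) (𝓝 0) (𝓝 0) := by
    have : Tendsto (fun t : ℝ ↦ ENNReal.ofReal t ^ 2) (𝓝 0) (𝓝 0) := by
      simpa [Function.comp_def] using
        ((ENNReal.continuous_pow 2).comp ENNReal.continuous_ofReal).tendsto 0
    simpa using ENNReal.Tendsto.mul_const this (Or.inr ENNReal.coe_ne_top)
  refine (hg.tendsto_setIntegral_nhds_zero (s := fun t ↦ ball c t) ?_).congr fun t ↦ ?_
  · exact tendsto_of_tendsto_of_tendsto_of_le_of_le tendsto_const_nhds hvol (fun _ ↦ bot_le)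
      fun t ↦ Measure.restrict_apply_le _ _
  · rw [Measure.restrict_restrict measurableSet_ball, inter_comm]

theorem setIntegral_Ioo_circleMap_eq_circleAverage (g : ℂ → E) (c : ℂ) (ρ : ℝ) :
    ∫ θ in Ioo (-π) π, g (circleMap c ρ θ) = (2 * π) • circleAverage g c ρ := by
  rw [circleAverage_eq_integral_add (-π), smul_inv_smul₀ two_pi_pos.ne',
    intervalIntegral.integral_comp_add_right (fun θ ↦ g (circleMap c ρ θ)),
    intervalIntegral.integral_of_le (by linarith [pi_pos]), integral_Ioc_eq_integral_Ioo,
    zero_add, show 2 * π + -π = π by ring]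

theorem setIntegral_ball_eq_intervalIntegral_circleAverage [CompleteSpace E] {g : ℂ → E}
    {c : ℂ} {s : ℝ} (hs : 0 ≤ s) (hg : ContinuousOn g (closedBall c s)) :
    ∫ z in ball c s, g z = ∫ ρ in 0..s, (2 * π * ρ) • circleAverage g c ρ := by
  set rect : Set (ℝ × ℝ) := Ioo 0 s ×ˢ Ioo (-π) π
  set G : ℝ × ℝ → E := fun p ↦ p.1 • g (circleMap c p.1 p.2)
  have hG : IntegrableOn G rect := by
    refine ContinuousOn.integrableOn_compact (isCompact_Icc.prod isCompact_Icc) ?_ |>.mono_set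
      (prod_mono Ioo_subset_Icc_self Ioo_subset_Icc_self)
    exact continuousOn_fst.smul (hg.comp (by fun_prop) fun p hp ↦
      closedBall_subset_closedBall hp.1.2 (circleMap_mem_closedBall c hp.1.1 p.2))
  have hpolar : ∫ z in ball c s, g z = ∫ p in rect, G p := by
    have hrect : rect ⊆ polarCoord.target := by
      rw [polarCoord_target]
      exact prod_mono Ioo_subset_Ioi_self subset_rfl
    rw [← integral_indicator measurableSet_ball, ← integral_add_left_eq_self _ c,
      ← Complex.integral_comp_polarCoord_symm, ← inter_eq_right.2 hrect,
      ← setIntegral_indicator (measurableSet_Ioo.prod measurableSet_Ioo)]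
    refine setIntegral_congr_fun polarCoord.open_target.measurableSet fun p hp ↦ ?_
    obtain ⟨hp₁, hp₂⟩ : p.1 ∈ Ioi 0 ∧ p.2 ∈ Ioo (-π) π := by rwa [polarCoord_target] at hp
    have hcirc : c + Complex.polarCoord.symm p = circleMap c p.1 p.2 := by
      simp only [circleMap, Complex.polarCoord_symm_apply, Complex.exp_mul_I]
      push_cast
      ring
    have hmem : circleMap c p.1 p.2 ∈ ball c s ↔ p ∈ rect := by
      rw [mem_ball, dist_eq_norm, circleMap_sub_center, norm_circleMap_zero,
        abs_of_pos (mem_Ioi.1 hp₁)]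
      simp [rect, mem_Ioi.1 hp₁, hp₂]
    rw [hcirc]
    by_cases hp' : p ∈ rect
    · rw [indicator_of_mem (hmem.2 hp'), indicator_of_mem hp']
    · rw [indicator_of_notMem (mt hmem.1 hp'), indicator_of_notMem hp', smul_zero]
  rw [hpolar, Measure.volume_eq_prod, setIntegral_prod _ (by rwa [← Measure.volume_eq_prod]),
    intervalIntegral.integral_of_le hs, integral_Ioc_eq_integral_Ioo]
  refine setIntegral_congr_fun measurableSet_Ioo fun ρ _ ↦ ?_
  rw [integral_smul, setIntegral_Ioo_circleMap_eq_circleAverage, smul_smul, mul_comm ρ]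

end Integrals

theorem sq_norm_le_circleAverage {f : ℂ → ℂ} {c : ℂ} {ρ : ℝ}
    (hf : DiffContOnCl ℂ f (ball c |ρ|)) :
    ‖f c‖ ^ 2 ≤ circleAverage (fun z ↦ ‖f z‖ ^ 2) c ρ := by
  calc ‖f c‖ ^ 2 = ‖circleAverage (fun z ↦ f z • f z) c ρ‖ := by
        rw [(hf.smul hf).circleAverage, smul_eq_mul, norm_mul, sq]
    _ ≤ circleAverage (fun z ↦ ‖f z‖ ^ 2) c ρ := by
        rw [circleAverage_def, circleAverage_def, norm_smul, Real.norm_of_nonneg (by positivity),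
          smul_eq_mul]
        gcongr
        refine (intervalIntegral.norm_integral_le_integral_norm two_pi_pos.le).trans_eq ?_
        simp only [smul_eq_mul, norm_mul, sq]

theorem mul_sq_norm_le_setIntegral_ball {f : ℂ → ℂ} {c : ℂ} {s : ℝ} (hs : 0 < s)
    (hf : DiffContOnCl ℂ f (ball c s)) :
    π * s ^ 2 * ‖f c‖ ^ 2 ≤ ∫ z in ball c s, ‖f z‖ ^ 2 := by
  have hcont : ContinuousOn (fun z ↦ ‖f z‖ ^ 2) (closedBall c s) := by
    rw [← closure_ball c hs.ne']
    exact hf.continuousOn.norm.pow 2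
  rw [setIntegral_ball_eq_intervalIntegral_circleAverage hs.le hcont]
  calc π * s ^ 2 * ‖f c‖ ^ 2 = ∫ ρ in 0..s, (2 * π * ρ) • ‖f c‖ ^ 2 := by
        rw [intervalIntegral.integral_smul_const, intervalIntegral.integral_const_mul,
          integral_id, smul_eq_mul]
        ring
    _ ≤ ∫ ρ in 0..s, (2 * π * ρ) • circleAverage (fun z ↦ ‖f z‖ ^ 2) c ρ := by
      refine intervalIntegral.integral_mono_on hs.le
        (Continuous.intervalIntegrable (by fun_prop) _ _) ?_ fun ρ hρ ↦ ?_
      · refine ContinuousOn.intervalIntegrable_of_Icc hs.le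
          ((continuousOn_id.const_mul _).smul ?_)
        exact (hcont.mono fun z hz ↦ mem_closedBall_iff_norm.2 hz.2).circleAverage
          fun _ hρ ↦ hρ.1
      · have hρ' : DiffContOnCl ℂ f (ball c |ρ|) :=
          hf.mono (ball_subset_ball (by rw [abs_of_nonneg hρ.1]; exact hρ.2))
        exact smul_le_smul_of_nonneg_left (sq_norm_le_circleAverage hρ')
          (by nlinarith [pi_pos, hρ.1])

theorem isLittleO_sub_inv_of_integrableOn_sq_norm {f : ℂ → ℂ} {s : Set ℂ} {c : ℂ}
    (hs : s ∈ 𝓝[≠] c) (hf : DifferentiableOn ℂ f s)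
    (hI : IntegrableOn (fun z ↦ ‖f z‖ ^ 2) s) :
    f =o[𝓝[≠] c] fun z ↦ (z - c)⁻¹ := by
  obtain ⟨R, hR, hRs⟩ := Metric.mem_nhdsWithin_iff.1 hs
  set energy : ℝ → ℝ := fun t ↦ ∫ z in s ∩ ball c t, ‖f z‖ ^ 2
  have hbound : ∀ z ∈ ball c (R / 2) \ {c},
      ‖f z * (z - c)‖ ^ 2 ≤ 4 / π * energy (2 * dist z c) := by
    rintro z ⟨hzR, hzc⟩
    have hsub := closedBall_half_dist_subset_ball_diff_singleton hzc
    have hsub_s : closedBall z (dist z c / 2) ⊆ s := hsub.trans fun w hw ↦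
      hRs ⟨ball_subset_ball (by linarith [mem_ball.1 hzR]) hw.1, hw.2⟩
    have hmean := mul_sq_norm_le_setIntegral_ball (half_pos (dist_pos.2 hzc))
      (hf.diffContOnCl_ball hsub_s)
    have hmono : ∫ w in ball z (dist z c / 2), ‖f w‖ ^ 2 ≤ energy (2 * dist z c) :=
      setIntegral_mono_set (hI.mono_set inter_subset_left) (.of_forall fun _ ↦ by positivity)
        (.of_forall (subset_inter (ball_subset_closedBall.trans hsub_s)
          (ball_subset_closedBall.trans (hsub.trans sdiff_subset))))
    rw [norm_mul, mul_pow, ← dist_eq_norm, div_mul_eq_mul_div, le_div_iff₀ pi_pos]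
    nlinarith
  have henergy : Tendsto (fun z ↦ 4 / π * energy (2 * dist z c)) (𝓝[≠] c) (𝓝 0) := by
    have hdist : Tendsto (fun z ↦ 2 * dist z c) (𝓝[≠] c) (𝓝 0) := by
      have : Continuous fun z : ℂ ↦ 2 * dist z c := by fun_prop
      simpa using (this.tendsto c).mono_left nhdsWithin_le_nhds
    simpa using ((tendsto_setIntegral_inter_ball_nhds_zero hI c).comp hdist).const_mul (4 / π)
  have hsq : Tendsto (fun z ↦ ‖f z * (z - c)‖ ^ 2) (𝓝[≠] c) (𝓝 0) :=
    squeeze_zero' (.of_forall fun _ ↦ by positivity)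
      (eventually_of_mem (sdiff_mem_nhdsWithin_compl (ball_mem_nhds c (half_pos hR)) _) hbound)
      henergy
  have hinv : ∀ᶠ z in 𝓝[≠] c, (z - c)⁻¹ = 0 → f z = 0 :=
    eventually_mem_nhdsWithin.mono fun z hz h ↦ absurd h (inv_ne_zero (sub_ne_zero.2 hz))
  rw [isLittleO_iff_tendsto' hinv, tendsto_zero_iff_norm_tendsto_zero]
  simpa only [div_inv_eq_mul, Real.sqrt_sq (norm_nonneg _), Real.sqrt_zero] using hsq.sqrt

/-- **Removal of singularity, integrable model case.**
A holomorphic function `u` on the punctured disk `B_R \ {0}` with finite energy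
`(1/2)∫ |du|² = ∫ |u'|² dA < ∞` extends to a holomorphic function on `B_R`. -/
theorem stmt12 (R : ℝ) (hR : 0 < R) (u : ℂ → ℂ)
    (hu : DifferentiableOn ℂ u (Metric.ball 0 R \ {0}))
    (hE : IntegrableOn (fun z => ‖deriv u z‖ ^ 2) (Metric.ball 0 R \ {0})) :
    ∃ v : ℂ → ℂ, DifferentiableOn ℂ v (Metric.ball 0 R) ∧
      ∀ z ∈ Metric.ball (0:ℂ) R \ {0}, v z = u z := by
  have hopen : IsOpen (ball (0 : ℂ) R \ {0}) := isOpen_ball.sdiff isClosed_singleton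
  have hu' : DifferentiableOn ℂ (deriv u) (ball 0 R \ {0}) := hu.deriv hopen
  have ho := isLittleO_sub_inv_of_integrableOn_sq_norm
    (sdiff_mem_nhdsWithin_compl (ball_mem_nhds 0 hR) _) hu' hE
  obtain ⟨G, hG⟩ := (Complex.differentiableOn_update_limUnder_of_isLittleO (ball_mem_nhds 0 hR)
    hu' (ho.sub isBoundedUnder_const.isLittleO_sub_self_inv)).isExactOn_ball
  obtain ⟨a, ha⟩ := hopen.exists_eq_add_of_deriv_eq
    (isPreconnected_ball_diff_singleton (by simp) 0 R) hu
    (fun z hz ↦ (hG z hz.1).differentiableAt.differentiableWithinAt)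
    fun z hz ↦ by rw [(hG z hz.1).deriv, Function.update_of_ne hz.2]
  exact ⟨fun z ↦ G z + a,
    fun z hz ↦ ((hG z hz).differentiableAt.add_const a).differentiableWithinAt,
    fun z hz ↦ (ha hz).symm⟩
end
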